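/- Let v_i be a subadditive valuation of bidder i, let x ∈ {1,…,k}, and let P_{−i} be any finitely supported probability distribution over bid sub-profiles b_{−i} of the other bidders. Under discriminatory pricing, with the allocation rule breaking ties in favor of bidder i, there exists a non-increasing bid vector b'_i with at most x nonzero entries such that E_{b_{−i}∼P_{−i}}[u_i^{v_i}(b'_i, b_{−i})] ≥ (1/2)·v_i(x) − E_{b_{−i}∼P_{−i}}[Σ_{j=1}^{x} β_j(b_{−i})]. -/

import Mathlib

open Finset MeasureTheory

noncomputable section

/-- A bid vector for an auction of `k` units: entry `j` is the `(j+1)`-st marginal bid. -/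
abbrev Bid (k : ℕ) := Fin k → ℝ

/-- Standard bid vectors: non-increasing and non-negative. -/
def StdBid {k : ℕ} (b : Bid k) : Prop :=
  (∀ j j' : Fin k, j ≤ j' → b j' ≤ b j) ∧ ∀ j, 0 ≤ b j

/-- Uniform bid vectors: a common value `c ≥ 0` on the first `q ≤ k` entries, `0` afterwards. -/
def UnifBid {k : ℕ} (b : Bid k) : Prop :=
  ∃ c : ℝ, 0 ≤ c ∧ ∃ q : ℕ, q ≤ k ∧ ∀ j : Fin k, b j = if (j : ℕ) < q then c else 0

/-- A valuation on `{0,…,k}`: zero at `0`, non-negative and non-decreasing (up to `k`). -/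
def IsValuation (k : ℕ) (v : ℕ → ℝ) : Prop :=
  v 0 = 0 ∧ (∀ x, 0 ≤ v x) ∧ ∀ x y : ℕ, x ≤ y → y ≤ k → v x ≤ v y

/-- Submodularity: non-increasing marginal values `v j - v (j-1)`. -/
def SubmodularVal (k : ℕ) (v : ℕ → ℝ) : Prop :=
  ∀ x y : ℕ, 1 ≤ x → x < y → y ≤ k → v y - v (y - 1) ≤ v x - v (x - 1)

/-- Subadditivity. -/
def SubadditiveVal (k : ℕ) (v : ℕ → ℝ) : Prop :=
  ∀ x y : ℕ, x + y ≤ k → v (x + y) ≤ v x + v y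

/-- `x` is a valid allocation for the bidding profile `b`:
all `k` units are allocated, and every winning bid is at least every losing bid. -/
def ValidAlloc {n k : ℕ} (b : Fin n → Bid k) (x : Fin n → ℕ) : Prop :=
  (∑ i, x i) = k ∧
  ∀ i i' : Fin n, ∀ j j' : Fin k, (j : ℕ) < x i → x i' ≤ (j' : ℕ) → b i' j' ≤ b i j

/-- The sum of the first `x` entries of a bid vector. -/
def winSum {k : ℕ} (b : Bid k) (x : ℕ) : ℝ :=
  ∑ j : Fin k, if (j : ℕ) < x then b j else 0

/-- No-overbidding of the bid vector `b` with respect to the valuation `v`. -/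
def NoOverbid {k : ℕ} (v : ℕ → ℝ) (b : Bid k) : Prop :=
  ∀ s : ℕ, 1 ≤ s → s ≤ k → winSum b s ≤ v s

/-- The `j`-th highest element of a multiset of reals (`j` is 1-indexed; default `0`). -/
def kthHighest (s : Multiset ℝ) (j : ℕ) : ℝ :=
  ((s.sort (· ≤ ·)).reverse).getD (j - 1) 0

/-- The multiset of all bids submitted under the profile `b`. -/
def allBids {n k : ℕ} (b : Fin n → Bid k) : Multiset ℝ :=
  (Finset.univ : Finset (Fin n × Fin k)).val.map fun p => b p.1 p.2

/-- The multiset of all bids submitted by the bidders other than `i`. -/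
def othersBids {n k : ℕ} (b : Fin n → Bid k) (i : Fin n) : Multiset ℝ :=
  ((Finset.univ : Finset (Fin n × Fin k)).filter (fun p => p.1 ≠ i)).val.map
    fun p => b p.1 p.2

/-- `β_j` (1-indexed): the `j`-th lowest among the `k` highest elements of `s`,
i.e. the `(k+1-j)`-th highest element of `s`. -/
def betaBid (k : ℕ) (s : Multiset ℝ) (j : ℕ) : ℝ := kthHighest s (k + 1 - j)

/-- `∑_{j=1}^{x} β_j(s)`. -/
def betaSum (k : ℕ) (s : Multiset ℝ) (x : ℕ) : ℝ := ∑ j ∈ Finset.Icc 1 x, betaBid k s j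

/-- The uniform price: the `(k+1)`-st highest of all submitted bids (`0` by default). -/
def price {n k : ℕ} (b : Fin n → Bid k) : ℝ := kthHighest (allBids b) (k + 1)

/-- Discriminatory-pricing utility of bidder `i` under the allocation rule `X`. -/
def uDisc {n k : ℕ} (X : (Fin n → Bid k) → Fin n → ℕ) (v : ℕ → ℝ) (i : Fin n)
    (b : Fin n → Bid k) : ℝ :=
  v (X b i) - winSum (b i) (X b i)

/-- Uniform-pricing utility of bidder `i` under the allocation rule `X`. -/
def uUnif {n k : ℕ} (X : (Fin n → Bid k) → Fin n → ℕ) (v : ℕ → ℝ) (i : Fin n)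
    (b : Fin n → Bid k) : ℝ :=
  v (X b i) - (X b i : ℝ) * price b

/-- The `x`-th entry (1-indexed) of a bid vector, with the convention that it is `0`
for `x = 0` (or `x > k`). -/
def lastWinBid {k : ℕ} (b : Bid k) (x : ℕ) : ℝ :=
  if h : 1 ≤ x ∧ x ≤ k then b ⟨x - 1, by omega⟩ else 0

/-- Social welfare of the allocation `x` under the valuation profile `v`. -/
def SW {n : ℕ} (v : Fin n → ℕ → ℝ) (x : Fin n → ℕ) : ℝ := ∑ i, v i (x i)

/-!
Sample a profile `ω₀ ∼ P₋ᵢ` and let bidder `i` bid its thresholds in reverse order,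
`(β_x(ω₀), …, β_1(ω₀), 0, …)`; this costs at most `∑_{j ≤ x} β_j(ω₀)`.
Against a profile `ω` the bidder wins (ties going its way) at least `m(ω₀, ω)` units,
the largest `j ≤ x` with `β_j(ω) ≤ β_{x+1-j}(ω₀)`, and maximality of `m(ω₀, ω)` forces
`m(ω₀, ω) + m(ω, ω₀) ≥ x`. Subadditivity then gives `v(x) ≤ v(m(ω₀, ω)) + v(m(ω, ω₀))`,
so averaging over independent `ω₀, ω` yields the bound in expectation,
and some fixed `ω₀` does at least as well.
-/

section OrderStatistics

variable {S : Multiset ℝ}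

lemma coe_reverse_sort (S : Multiset ℝ) : ((S.sort (· ≤ ·)).reverse : Multiset ℝ) = S := by
  rw [Multiset.coe_reverse, Multiset.sort_eq]

lemma getElem_reverse_sort_le {a b : ℕ} (ha : a < (S.sort (· ≤ ·)).reverse.length)
    (hb : b < (S.sort (· ≤ ·)).reverse.length) (hab : a ≤ b) :
    (S.sort (· ≤ ·)).reverse[b] ≤ (S.sort (· ≤ ·)).reverse[a] :=
  (List.pairwise_reverse.mpr (Multiset.pairwise_sort S (· ≤ ·))).rel_get_of_le
    (a := ⟨a, ha⟩) (b := ⟨b, hb⟩) hab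

lemma kthHighest_nonneg (hS : ∀ a ∈ S, 0 ≤ a) (j : ℕ) : 0 ≤ kthHighest S j := by
  rw [kthHighest, List.getD_eq_getElem?_getD]
  cases h : (S.sort (· ≤ ·)).reverse[j - 1]? with
  | none => rfl
  | some a => exact hS a (by simpa using List.mem_of_getElem? h)

lemma kthHighest_antitone (hS : ∀ a ∈ S, 0 ≤ a) : Antitone (kthHighest S) := by
  intro j j' hjj
  by_cases h' : j' - 1 < (S.sort (· ≤ ·)).reverse.length
  · rw [kthHighest, kthHighest, List.getD_eq_getElem _ _ h',
      List.getD_eq_getElem _ _ (by omega)]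
    exact getElem_reverse_sort_le _ _ (by omega)
  · rw [kthHighest, List.getD_eq_default _ _ (not_lt.mp h')]
    exact kthHighest_nonneg hS j

lemma kthHighest_le_of_card_lt {t : ℝ} {q : ℕ} (ht : 0 ≤ t)
    (hc : (S.filter (t < ·)).card < q) : kthHighest S q ≤ t := by
  rw [← coe_reverse_sort S, Multiset.filter_coe, Multiset.coe_card] at hc
  rw [kthHighest]
  by_cases hq : q - 1 < (S.sort (· ≤ ·)).reverse.length
  · rw [List.getD_eq_getElem _ _ hq]
    by_contra! hlt
    have htake : ((S.sort (· ≤ ·)).reverse.take q).filter (t < ·)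
        = (S.sort (· ≤ ·)).reverse.take q := by
      refine List.filter_eq_self.mpr fun a ha => ?_
      obtain ⟨idx, hidx, rfl⟩ := List.mem_iff_getElem.mp ha
      rw [List.length_take] at hidx
      rw [List.getElem_take]
      exact decide_eq_true (hlt.trans_le (getElem_reverse_sort_le _ _ (by omega)))
    have := ((List.take_sublist q (S.sort (· ≤ ·)).reverse).filter (t < ·)).length_le
    rw [htake, List.length_take] at this
    omega
  · rw [List.getD_eq_default _ _ (not_lt.mp hq)]
    exact ht

lemma le_kthHighest_of_le_card {t : ℝ} {j : ℕ} (hj : 1 ≤ j)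
    (hc : j ≤ (S.filter (t ≤ ·)).card) : t ≤ kthHighest S j := by
  rw [← coe_reverse_sort S, Multiset.filter_coe, Multiset.coe_card] at hc
  rw [kthHighest]
  by_contra! hlt
  have hdrop : ((S.sort (· ≤ ·)).reverse.drop (j - 1)).filter (t ≤ ·) = [] := by
    refine List.filter_eq_nil_iff.mpr fun a ha => ?_
    obtain ⟨idx, hidx, rfl⟩ := List.mem_iff_getElem.mp ha
    rw [List.length_drop] at hidx
    rw [List.getD_eq_getElem _ _ (by omega)] at hlt
    rw [List.getElem_drop]
    simpa only [decide_eq_true_eq, not_le] using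
      (getElem_reverse_sort_le _ _ (Nat.le_add_right _ idx)).trans_lt hlt
  have hsplit := congrArg (fun l => (l.filter (t ≤ ·)).length)
    (List.take_append_drop (j - 1) (S.sort (· ≤ ·)).reverse)
  simp only [List.filter_append, hdrop, List.append_nil] at hsplit
  have := (List.filter_sublist (p := fun x => decide (t ≤ x))
    (l := (S.sort (· ≤ ·)).reverse.take (j - 1))).length_le
  rw [List.length_take] at this
  omega

end OrderStatistics

section Allocation

variable {n k : ℕ} {b : Fin n → Bid k} {i : Fin n} {o : Fin n → ℕ}

lemma ValidAlloc.le {y : Fin n → ℕ} (hy : ValidAlloc b y) (i : Fin n) : y i ≤ k :=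
  hy.1 ▸ Finset.single_le_sum (fun _ _ => Nat.zero_le _) (Finset.mem_univ i)

lemma othersBids_update (b : Fin n → Bid k) (i : Fin n) (g : Bid k) :
    othersBids (Function.update b i g) i = othersBids b i := by
  refine Multiset.map_congr rfl fun p hp => ?_
  rw [Function.update_of_ne (Finset.mem_filter.mp hp).2]

lemma othersBids_nonneg (hb : ∀ i' ≠ i, StdBid (b i')) : ∀ a ∈ othersBids b i, 0 ≤ a := by
  intro a ha
  obtain ⟨p, hp, rfl⟩ := Multiset.mem_map.mp ha
  exact (hb p.1 (Finset.mem_filter.mp hp).2).2 p.2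

lemma card_filter_othersBids (p : ℝ → Prop) [DecidablePred p] :
    ((othersBids b i).filter p).card = #{q : Fin n × Fin k | q.1 ≠ i ∧ p (b q.1 q.2)} := by
  rw [othersBids, Multiset.filter_map, Multiset.card_map, ← Finset.filter_val,
    Finset.filter_filter]
  rfl

def IsSelectionOfOthers (b : Fin n → Bid k) (i : Fin n) (o : Fin n → ℕ) : Prop :=
  (∀ i', o i' ≤ k) ∧ ∀ i₁ i₂, i₁ ≠ i → i₂ ≠ i → ∀ j j' : Fin k,
    (j : ℕ) < o i₁ → o i₂ ≤ (j' : ℕ) → b i₂ j' ≤ b i₁ j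

def selectedBids (k : ℕ) (i : Fin n) (o : Fin n → ℕ) : Finset (Fin n × Fin k) :=
  {p | p.1 ≠ i ∧ (p.2 : ℕ) < o p.1}

lemma card_selectedBids (ho : ∀ i', o i' ≤ k) :
    #(selectedBids k i o) = ∑ i' with i' ≠ i, o i' := by
  rw [selectedBids, Finset.card_filter, Fintype.sum_prod_type, Finset.sum_filter]
  refine Finset.sum_congr rfl fun i' _ => ?_
  by_cases h : i' = i
  · simp [h]
  · simp only [h, ne_eq, not_false_eq_true, true_and, if_true]
    rw [Fin.sum_univ_eq_sum_range (fun j => if j < o i' then 1 else 0), ← Finset.sum_filter]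
    have : {j ∈ range k | j < o i'} = range (o i') := by
      ext j; simp only [Finset.mem_filter, Finset.mem_range]; have := ho i'; omega
    simp [this]

namespace IsSelectionOfOthers

lemma kthHighest_le (ho : IsSelectionOfOthers b i o) (hb : ∀ i' ≠ i, StdBid (b i'))
    {i₁ : Fin n} (h₁ : i₁ ≠ i) {j : Fin k} (hj : (j : ℕ) < o i₁) :
    kthHighest (othersBids b i) (∑ i' with i' ≠ i, o i') ≤ b i₁ j := by
  refine kthHighest_le_of_card_lt ((hb i₁ h₁).2 j) ?_
  rw [card_filter_othersBids, ← card_selectedBids ho.1]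
  have hsub : ({p : Fin n × Fin k | p.1 ≠ i ∧ b i₁ j < b p.1 p.2} : Finset _)
      ⊆ (selectedBids k i o).erase (i₁, j) := by
    intro p hp
    simp only [selectedBids, Finset.mem_filter, Finset.mem_univ, true_and, Finset.mem_erase] at hp ⊢
    refine ⟨?_, hp.1, ?_⟩
    · rintro rfl
      exact lt_irrefl _ hp.2
    · by_contra! hcon
      exact (ho.2 i₁ p.1 h₁ hp.1 j p.2 hj hcon).not_gt hp.2
  have hmem : (i₁, j) ∈ selectedBids k i o := by
    simp [selectedBids, h₁, hj]
  exact (Finset.card_le_card hsub).trans_lt (Finset.card_erase_lt_of_mem hmem)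

lemma le_kthHighest (ho : IsSelectionOfOthers b i o) {i₂ : Fin n} (h₂ : i₂ ≠ i) {j' : Fin k}
    (hj' : o i₂ ≤ (j' : ℕ)) :
    b i₂ j' ≤ kthHighest (othersBids b i) (∑ i' with i' ≠ i, o i' + 1) := by
  refine le_kthHighest_of_le_card (Nat.le_add_left 1 _) ?_
  rw [card_filter_othersBids, ← card_selectedBids ho.1]
  have hnot : (i₂, j') ∉ selectedBids k i o := by
    simp [selectedBids, hj']
  have hsub : insert (i₂, j') (selectedBids k i o)
      ⊆ ({p : Fin n × Fin k | p.1 ≠ i ∧ b i₂ j' ≤ b p.1 p.2} : Finset _) := by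
    intro p hp
    simp only [selectedBids, Finset.mem_insert, Finset.mem_filter, Finset.mem_univ, true_and]
      at hp ⊢
    rcases hp with rfl | ⟨hp, hpo⟩
    · exact ⟨h₂, le_rfl⟩
    · exact ⟨hp, ho.2 p.1 i₂ hp h₂ p.2 j' hpo hj'⟩
  rw [← Finset.card_insert_of_notMem hnot]
  exact Finset.card_le_card hsub

lemma update_succ (ho : IsSelectionOfOthers b i o) (hb : ∀ i' ≠ i, StdBid (b i'))
    {i₁ : Fin n} {j₁ : Fin k} (hj₁ : (j₁ : ℕ) = o i₁)
    (hmax : ∀ i₂ ≠ i, ∀ j₂ : Fin k, (j₂ : ℕ) = o i₂ → b i₂ j₂ ≤ b i₁ j₁) :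
    IsSelectionOfOthers b i (Function.update o i₁ (o i₁ + 1)) := by
  refine ⟨fun i' => ?_, fun i' i₂ h' h₂ j j' hj hj' => ?_⟩
  · rcases eq_or_ne i' i₁ with rfl | hne
    · rw [Function.update_self]; omega
    · rw [Function.update_of_ne hne]; exact ho.1 i'
  have hj'₂ : o i₂ ≤ (j' : ℕ) := by
    rcases eq_or_ne i₂ i₁ with rfl | hne
    · rw [Function.update_self] at hj'; omega
    · rwa [Function.update_of_ne hne] at hj'
  by_cases hold : (j : ℕ) < o i'
  · exact ho.2 i' i₂ h' h₂ j j' hold hj'₂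
  obtain ⟨rfl, rfl⟩ : i' = i₁ ∧ j = j₁ := by
    by_cases he : i' = i₁
    · subst he
      rw [Function.update_self] at hj
      exact ⟨rfl, Fin.ext (by omega)⟩
    · rw [Function.update_of_ne he] at hj
      exact absurd hj hold
  rcases eq_or_ne i₂ i' with rfl | hne
  · rw [Function.update_self] at hj'
    exact (hb i₂ h₂).1 j j' (Fin.le_def.mpr (by omega))
  · calc b i₂ j' ≤ b i₂ ⟨o i₂, by omega⟩ := (hb i₂ h₂).1 _ _ (Fin.le_def.mpr hj'₂)
      _ ≤ b i' j := hmax i₂ h₂ _ rfl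

end IsSelectionOfOthers

lemma exists_isSelectionOfOthers (hb : ∀ i' ≠ i, StdBid (b i')) {i₀ : Fin n} (hi₀ : i₀ ≠ i) :
    ∀ q ≤ k, ∃ o, IsSelectionOfOthers b i o ∧ ∑ i' with i' ≠ i, o i' = q := by
  intro q
  induction q with
  | zero =>
    refine fun _ => ⟨0, ⟨fun _ => Nat.zero_le _, fun _ _ _ _ _ _ hj => ?_⟩, by simp⟩
    exact absurd hj (Nat.not_lt_zero _)
  | succ q ih =>
    intro hq
    obtain ⟨o, ho, hsum⟩ := ih (by omega)
    have hi₀k : o i₀ < k := by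
      have := Finset.single_le_sum (f := o) (s := {i' | i' ≠ i}) (fun _ _ => Nat.zero_le _)
        (Finset.mem_filter.mpr ⟨Finset.mem_univ _, hi₀⟩)
      omega
    -- the next unit goes to a bidder whose highest unallotted bid is largest
    have hnext : ({p : Fin n × Fin k | p.1 ≠ i ∧ (p.2 : ℕ) = o p.1} : Finset _).Nonempty :=
      ⟨(i₀, ⟨o i₀, hi₀k⟩), by simp [hi₀]⟩
    obtain ⟨⟨i₁, j₁⟩, hp₁, hmax⟩ := Finset.exists_max_image _ (fun p => b p.1 p.2) hnext
    simp only [Finset.mem_filter, Finset.mem_univ, true_and] at hp₁ hmax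
    refine ⟨_, ho.update_succ hb hp₁.2 fun i₂ h₂ j₂ hj₂ => hmax (i₂, j₂) ⟨h₂, hj₂⟩, ?_⟩
    have hmem : i₁ ∈ ({i' | i' ≠ i} : Finset (Fin n)) := by simp [hp₁.1]
    rw [Finset.sum_update_of_mem hmem, ← hsum, Finset.sum_eq_sum_sdiff_singleton_add hmem]
    ring

end Allocation

lemma exists_validAlloc_of_betaBid {n k : ℕ} {b : Fin n → Bid k} {i : Fin n}
    (hb : ∀ i', StdBid (b i')) {m : ℕ} (hm : m ≤ k)
    (hwin : ∀ j : Fin k, (j : ℕ) < m → betaBid k (othersBids b i) m ≤ b i j)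
    (hlose : ∀ j : Fin k, m ≤ (j : ℕ) → b i j ≤ betaBid k (othersBids b i) (m + 1)) :
    ∃ y, ValidAlloc b y ∧ m ≤ y i := by
  by_cases hothers : ∃ i₀, i₀ ≠ i
  swap
  · push Not at hothers
    refine ⟨Pi.single i k, ⟨by simp, fun _ i₂ _ j' _ hj' => ?_⟩, by simpa using hm⟩
    rw [hothers i₂, Pi.single_eq_same] at hj'
    exact absurd j'.isLt (not_lt.mpr hj')
  obtain ⟨i₀, hi₀⟩ := hothers
  obtain ⟨o, ho, hsum⟩ :=
    exists_isSelectionOfOthers (fun i' _ => hb i') hi₀ (k - m) (Nat.sub_le k m)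
  have hβm : betaBid k (othersBids b i) m
      = kthHighest (othersBids b i) (∑ i' with i' ≠ i, o i' + 1) := by
    rw [hsum, betaBid]; congr 1; omega
  have hβm₁ : betaBid k (othersBids b i) (m + 1)
      = kthHighest (othersBids b i) (∑ i' with i' ≠ i, o i') := by
    rw [hsum, betaBid]; congr 1; omega
  refine ⟨Function.update o i m, ⟨?_, fun i₁ i₂ j j' hj hj' => ?_⟩, by simp⟩
  · rw [Finset.sum_update_of_mem (Finset.mem_univ i), Finset.sdiff_singleton_eq_erase,
      ← Finset.filter_ne', hsum]
    omega
  by_cases h₁ : i₁ = i <;> by_cases h₂ : i₂ = i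
  · subst h₁ h₂
    rw [Function.update_self] at hj hj'
    exact (hb _).1 j j' (Fin.le_def.mpr (by omega))
  · subst h₁
    rw [Function.update_self] at hj
    rw [Function.update_of_ne h₂] at hj'
    exact (ho.le_kthHighest h₂ hj').trans (hβm ▸ hwin j hj)
  · subst h₂
    rw [Function.update_of_ne h₁] at hj
    rw [Function.update_self] at hj'
    exact (hβm₁ ▸ hlose j' hj').trans (ho.kthHighest_le (fun i' _ => hb i') h₁ hj)
  · rw [Function.update_of_ne h₁] at hj
    rw [Function.update_of_ne h₂] at hj'
    exact ho.2 i₁ i₂ h₁ h₂ j j' hj hj'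

section Beta

variable {k : ℕ} {S : Multiset ℝ}

lemma betaBid_nonneg (hS : ∀ a ∈ S, 0 ≤ a) (j : ℕ) : 0 ≤ betaBid k S j :=
  kthHighest_nonneg hS _

lemma betaBid_monotone (hS : ∀ a ∈ S, 0 ≤ a) : Monotone (betaBid k S) :=
  fun _ _ h => kthHighest_antitone hS (by omega)

end Beta

section ReverseBid

variable {k x : ℕ} {β : ℕ → ℝ}

def reverseBid (k x : ℕ) (β : ℕ → ℝ) : Bid k := fun j => if (j : ℕ) < x then β (x - j) else 0

lemma reverseBid_eq_zero {j : Fin k} (hj : x ≤ (j : ℕ)) : reverseBid k x β j = 0 :=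
  if_neg (not_lt.mpr hj)

lemma reverseBid_nonneg (hβ₀ : ∀ j, 0 ≤ β j) (j : Fin k) : 0 ≤ reverseBid k x β j := by
  unfold reverseBid
  split_ifs
  exacts [hβ₀ _, le_rfl]

lemma reverseBid_stdBid (hβ : Monotone β) (hβ₀ : ∀ j, 0 ≤ β j) : StdBid (reverseBid k x β) := by
  refine ⟨fun j j' hjj' => ?_, reverseBid_nonneg hβ₀⟩
  by_cases hj' : (j' : ℕ) < x
  · have := Fin.le_def.mp hjj'
    simp only [reverseBid, hj', show (j : ℕ) < x by omega, if_true]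
    exact hβ (by omega)
  · rw [reverseBid_eq_zero (not_lt.mp hj')]
    exact reverseBid_nonneg hβ₀ j

lemma winSum_reverseBid_le (hβ₀ : ∀ j, 0 ≤ β j) (s : ℕ) :
    winSum (reverseBid k x β) s ≤ ∑ j ∈ Icc 1 x, β j := by
  calc winSum (reverseBid k x β) s ≤ ∑ j : Fin k, reverseBid k x β j := by
        refine Finset.sum_le_sum fun j _ => ?_
        split_ifs
        exacts [le_rfl, reverseBid_nonneg hβ₀ j]
    _ = ∑ j ∈ range (min k x), β (x - j) := by
        simp only [reverseBid]
        rw [Fin.sum_univ_eq_sum_range (fun j => if j < x then β (x - j) else 0), ← sum_filter]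
        congr 1
        ext j; simp only [mem_filter, mem_range]; omega
    _ ≤ ∑ j ∈ range x, β (x - j) :=
        Finset.sum_le_sum_of_subset_of_nonneg (Finset.range_subset_range.mpr (min_le_right k x))
          fun j _ _ => hβ₀ _
    _ = ∑ j ∈ Icc 1 x, β j := by
        rw [← Finset.Ico_add_one_right_eq_Icc, Finset.sum_Ico_eq_sum_range,
          ← Finset.sum_range_reflect]
        refine Finset.sum_congr (by simp) fun j hj => ?_
        rw [mem_range] at hj
        congr 1
        omega

end ReverseBid

lemma le_findGreatest_add_findGreatest (β β' : ℕ → ℝ) (x : ℕ) :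
    x ≤ Nat.findGreatest (fun j => β j ≤ β' (x + 1 - j)) x
      + Nat.findGreatest (fun j => β' j ≤ β (x + 1 - j)) x := by
  set m := Nat.findGreatest (fun j => β j ≤ β' (x + 1 - j)) x
  rcases (Nat.findGreatest_le (P := fun j => β j ≤ β' (x + 1 - j)) x).lt_or_eq with hm | hm
  · have hfail := Nat.findGreatest_is_greatest (Nat.lt_succ_self m) hm
    have hpass : β' (x - m) ≤ β (x + 1 - (x - m)) := by
      rw [show x + 1 - (x - m) = m + 1 by omega]
      exact (not_le.mp hfail).le.trans_eq' (by congr 1; omega)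
    have := Nat.le_findGreatest (P := fun j => β' j ≤ β (x + 1 - j)) (Nat.sub_le x m) hpass
    omega
  · omega

lemma SubadditiveVal.le_add_of_le_add {k : ℕ} {v : ℕ → ℝ} (hsa : SubadditiveVal k v)
    (hmono : ∀ x y : ℕ, x ≤ y → y ≤ k → v x ≤ v y) {x a c : ℕ} (hx : x ≤ k) (ha : a ≤ x)
    (hc : c ≤ k) (h : x ≤ a + c) : v x ≤ v a + v c := by
  calc v x = v (a + (x - a)) := by rw [Nat.add_sub_cancel' ha]
    _ ≤ v a + v (x - a) := hsa a (x - a) (by omega)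
    _ ≤ v a + v c := add_le_add le_rfl (hmono (x - a) c (by omega) hc)

section Averaging

variable {P : Type*} [Fintype P] {q : P → ℝ}

lemma le_two_mul_sum_mul_sum_of_le_add_swap (hq0 : ∀ ω, 0 ≤ q ω) (hq1 : ∑ ω, q ω = 1)
    {f : P → P → ℝ} {c : ℝ} (h : ∀ ω ω', c ≤ f ω ω' + f ω' ω) :
    c ≤ 2 * ∑ ω, q ω * ∑ ω', q ω' * f ω ω' := by
  calc c = ∑ ω, ∑ ω', q ω * q ω' * c := by
        simp_rw [mul_assoc, ← Finset.mul_sum, ← Finset.sum_mul, hq1, one_mul]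
    _ ≤ ∑ ω, ∑ ω', q ω * q ω' * (f ω ω' + f ω' ω) := by
        gcongr with ω _ ω' _
        · exact mul_nonneg (hq0 ω) (hq0 ω')
        · exact h ω ω'
    _ = ∑ ω, ∑ ω', q ω * q ω' * f ω ω' + ∑ ω, ∑ ω', q ω * q ω' * f ω' ω := by
        simp_rw [mul_add, Finset.sum_add_distrib]
    _ = 2 * ∑ ω, ∑ ω', q ω * q ω' * f ω ω' := by
        rw [two_mul, Finset.sum_comm (f := fun ω ω' => q ω * q ω' * f ω' ω)]
        congr 1
        exact Finset.sum_congr rfl fun ω _ => Finset.sum_congr rfl fun ω' _ => by ring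
    _ = 2 * ∑ ω, q ω * ∑ ω', q ω' * f ω ω' := by
        simp_rw [Finset.mul_sum, mul_assoc]

lemma exists_le_of_le_sum_mul (hq0 : ∀ ω, 0 ≤ q ω) (hq1 : ∑ ω, q ω = 1) {g : P → ℝ} {c : ℝ}
    (h : c ≤ ∑ ω, q ω * g ω) : ∃ ω, c ≤ g ω := by
  have hne : (Finset.univ : Finset P).Nonempty := by
    by_contra hP
    rw [Finset.not_nonempty_iff_eq_empty.mp hP, Finset.sum_empty] at hq1
    exact zero_ne_one hq1
  obtain ⟨ω, -, hmax⟩ := Finset.exists_max_image _ g hne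
  refine ⟨ω, h.trans ?_⟩
  calc ∑ ω', q ω' * g ω' ≤ ∑ ω', q ω' * g ω := by
        gcongr with ω' _
        exacts [hq0 ω', hmax ω' (Finset.mem_univ _)]
    _ = g ω := by rw [← Finset.sum_mul, hq1, one_mul]

lemma half_mul_sub_sum_le_sum_mul_sum (hq0 : ∀ ω, 0 ≤ q ω) (hq1 : ∑ ω, q ω = 1)
    {f u : P → P → ℝ} {B : P → ℝ} {c : ℝ} (hc : ∀ ω ω', c ≤ f ω ω' + f ω' ω)
    (hu : ∀ ω ω', f ω ω' - B ω ≤ u ω ω') :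
    1 / 2 * c - ∑ ω, q ω * B ω ≤ ∑ ω, q ω * ∑ ω', q ω' * u ω ω' := by
  have hsym := le_two_mul_sum_mul_sum_of_le_add_swap hq0 hq1 hc
  calc 1 / 2 * c - ∑ ω, q ω * B ω ≤ ∑ ω, q ω * ∑ ω', q ω' * (f ω ω' - B ω) := by
        simp only [mul_sub, Finset.sum_sub_distrib, ← Finset.sum_mul, hq1, one_mul]
        linarith
    _ ≤ ∑ ω, q ω * ∑ ω', q ω' * u ω ω' := by
        gcongr with ω _ ω' _
        exacts [hq0 ω, hq0 ω', hu ω ω']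

end Averaging

lemma le_uDisc_update_reverseBid {n k : ℕ} {X : (Fin n → Bid k) → Fin n → ℕ} {v : ℕ → ℝ}
    {i : Fin n} {b : Fin n → Bid k} (hX : ∀ b, ValidAlloc b (X b))
    (hfav : ∀ b y, ValidAlloc b y → y i ≤ X b i)
    (hvmono : ∀ x y : ℕ, x ≤ y → y ≤ k → v x ≤ v y) (hb : ∀ i' ≠ i, StdBid (b i'))
    {β₀ : ℕ → ℝ} (hβ₀ : Monotone β₀) (hβ₀nn : ∀ j, 0 ≤ β₀ j) {x : ℕ} (hx : x ≤ k) :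
    v (Nat.findGreatest (fun j => betaBid k (othersBids b i) j ≤ β₀ (x + 1 - j)) x)
        - ∑ j ∈ Icc 1 x, β₀ j
      ≤ uDisc X v i (Function.update b i (reverseBid k x β₀)) := by
  set β := betaBid k (othersBids b i)
  set m := Nat.findGreatest (fun j => β j ≤ β₀ (x + 1 - j)) x
  set b' := Function.update b i (reverseBid k x β₀) with hb'_def
  have hb'i : b' i = reverseBid k x β₀ := Function.update_self i _ b
  have hmx : m ≤ x := Nat.findGreatest_le x
  have hβ : Monotone β := betaBid_monotone (othersBids_nonneg hb)
  have hb' : ∀ i', StdBid (b' i') := by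
    intro i'
    rcases eq_or_ne i' i with rfl | h
    · rw [hb'i]; exact reverseBid_stdBid hβ₀ hβ₀nn
    · rw [hb'_def, Function.update_of_ne h]; exact hb i' h
  have hothers : othersBids b' i = othersBids b i := othersBids_update b i _
  have hwin : ∀ j : Fin k, (j : ℕ) < m → betaBid k (othersBids b' i) m ≤ b' i j := by
    intro j hj
    have hm0 : m ≠ 0 := by omega
    have hm : β m ≤ β₀ (x + 1 - m) := Nat.findGreatest_of_ne_zero rfl hm0
    rw [hothers, hb'i, reverseBid, if_pos (by omega)]
    exact hm.trans (hβ₀ (by omega))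
  have hlose : ∀ j : Fin k, m ≤ (j : ℕ) → b' i j ≤ betaBid k (othersBids b' i) (m + 1) := by
    intro j hj
    rw [hothers, hb'i]
    by_cases hjx : (j : ℕ) < x
    · have hfail : ¬β (m + 1) ≤ β₀ (x + 1 - (m + 1)) :=
        Nat.findGreatest_is_greatest (Nat.lt_succ_self m) (by omega)
      rw [reverseBid, if_pos hjx]
      exact (hβ₀ (by omega)).trans (not_le.mp hfail).le
    · rw [reverseBid_eq_zero (not_lt.mp hjx)]
      exact betaBid_nonneg (othersBids_nonneg hb) _
  obtain ⟨y, hy, hmy⟩ := exists_validAlloc_of_betaBid hb' (hmx.trans hx) hwin hlose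
  have hv : v m ≤ v (X b' i) := hvmono _ _ (hmy.trans (hfav b' y hy)) ((hX b').le i)
  have hpay : winSum (b' i) (X b' i) ≤ ∑ j ∈ Icc 1 x, β₀ j := by
    rw [hb'i]; exact winSum_reverseBid_le hβ₀nn _
  rw [uDisc]
  linarith

theorem stmt10_general (n k : ℕ) (i : Fin n)
    -- the subadditive valuation of bidder `i`
    (v : ℕ → ℝ) (hv : IsValuation k v) (hsa : SubadditiveVal k v)
    (x : ℕ) (hxk : x ≤ k)
    -- the allocation rule; ties are broken in favor of bidder `i`
    (X : (Fin n → Bid k) → Fin n → ℕ)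
    (hX : ∀ b, ValidAlloc b (X b))
    (hfav : ∀ b y, ValidAlloc b y → y i ≤ X b i)
    -- a finitely supported distribution over the others' bid profiles
    (P : Type) [Fintype P] (q : P → ℝ)
    (hq0 : ∀ ω, 0 ≤ q ω) (hq1 : ∑ ω, q ω = 1)
    (bo : P → Fin n → Bid k)
    (hbo : ∀ ω j, j ≠ i → StdBid (bo ω j)) :
    ∃ b' : Bid k, StdBid b' ∧ (∀ j : Fin k, x ≤ (j : ℕ) → b' j = 0) ∧
      (1 / 2) * v x - (∑ ω, q ω * betaSum k (othersBids (bo ω) i) x)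
        ≤ ∑ ω, q ω * uDisc X v i (Function.update (bo ω) i b') := by
  obtain ⟨-, -, hvmono⟩ := hv
  set β : P → ℕ → ℝ := fun ω => betaBid k (othersBids (bo ω) i)
  have hβ : ∀ ω, Monotone (β ω) := fun ω => betaBid_monotone (othersBids_nonneg (hbo ω))
  have hβnn : ∀ ω j, 0 ≤ β ω j := fun ω => betaBid_nonneg (othersBids_nonneg (hbo ω))
  set m : P → P → ℕ := fun ω₀ ω => Nat.findGreatest (fun j => β ω j ≤ β ω₀ (x + 1 - j)) x
  have hvx : ∀ ω₀ ω, v x ≤ v (m ω₀ ω) + v (m ω ω₀) := fun ω₀ ω =>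
    hsa.le_add_of_le_add hvmono hxk (Nat.findGreatest_le x) ((Nat.findGreatest_le x).trans hxk)
      (le_findGreatest_add_findGreatest _ _ x)
  have hu : ∀ ω₀ ω, v (m ω₀ ω) - betaSum k (othersBids (bo ω₀) i) x
      ≤ uDisc X v i (Function.update (bo ω) i (reverseBid k x (β ω₀))) := fun ω₀ ω =>
    le_uDisc_update_reverseBid hX hfav hvmono (hbo ω) (hβ ω₀) (hβnn ω₀) hxk
  obtain ⟨ω₀, hω₀⟩ := exists_le_of_le_sum_mul hq0 hq1
    (half_mul_sub_sum_le_sum_mul_sum hq0 hq1 (f := fun ω₀ ω => v (m ω₀ ω)) hvx hu)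
  exact ⟨reverseBid k x (β ω₀), reverseBid_stdBid (hβ ω₀) (hβnn ω₀),
    fun _ => reverseBid_eq_zero, hω₀⟩

/-- Subadditive valuations, discriminatory pricing, ties broken in
favor of bidder `i`: for every `x ∈ {1,…,k}` and every finitely supported
distribution `P₋ᵢ` over bid sub-profiles of the other bidders, there is a
non-increasing bid vector `b'ᵢ` with at most `x` nonzero entries such that
`E[uᵢ(b'ᵢ, b₋ᵢ)] ≥ (1/2)·vᵢ(x) - E[∑_{j=1}^{x} β_j(b₋ᵢ)]`. -/
theorem stmt10 (n k : ℕ) (hk : 1 ≤ k) (i : Fin n)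
    -- the subadditive valuation of bidder `i`
    (v : ℕ → ℝ) (hv : IsValuation k v) (hsa : SubadditiveVal k v)
    (x : ℕ) (hx1 : 1 ≤ x) (hxk : x ≤ k)
    -- the allocation rule; ties are broken in favor of bidder `i`
    (X : (Fin n → Bid k) → Fin n → ℕ)
    (hX : ∀ b, ValidAlloc b (X b))
    (hfav : ∀ b y, ValidAlloc b y → y i ≤ X b i)
    -- a finitely supported distribution over the others' bid profiles
    (P : Type) [Fintype P] (q : P → ℝ)
    (hq0 : ∀ ω, 0 ≤ q ω) (hq1 : ∑ ω, q ω = 1)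
    (bo : P → Fin n → Bid k)
    (hbo : ∀ ω j, j ≠ i → StdBid (bo ω j)) :
    ∃ b' : Bid k, StdBid b' ∧ (∀ j : Fin k, x ≤ (j : ℕ) → b' j = 0) ∧
      (1 / 2) * v x - (∑ ω, q ω * betaSum k (othersBids (bo ω) i) x)
        ≤ ∑ ω, q ω * uDisc X v i (Function.update (bo ω) i b') :=
  stmt10_general n k i v hv hsa x hxk X hX hfav P q hq0 hq1 bo hbo

end
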